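/- Let d ≥ 4 be an integer and α ∈ [5−d, 2). Define φ(r) = (ω_{d−1}/ω_d) ∫₀^π (r − cos θ)(sin θ)^{d−2} A(r,θ)^{α−2} dθ, where A(r,θ) = √(1 + r² − 2r cos θ). Then r ↦ φ(r)/r is strictly decreasing on (0, ∞). -/

import Mathlib

/-!
Write `A = √(1 + r² - 2 r cos θ)`, so that `|sin θ| ≤ A` and `|r - cos θ| ≤ A`; this keeps every
integrand below bounded, also near the singular point `r = 1`, `θ = 0`. Integrating by parts
against `sin θ ^ (d - 1) * A ^ (α - 2)` gives `φ r / r = (ω_{d-1} / ω_d) ∫₀^π Ψ(r, θ) dθ` with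
`Ψ = sin^{d-2} θ A^{α-4} ((r - cos θ)² + (d + α - 3)/(d - 1) sin² θ)`, and
`∂Ψ/∂r = (α - 2) N` with `N = sin^{d-2} θ A^{α-6} (r - cos θ) ((r - cos θ)² + κ sin² θ)`,
`κ = (d + α - 5)/(d - 1) ≥ 0`. Since `α < 2` it suffices that `∫₀^π N dθ > 0`.

For `r ≥ 1` the integrand `N` is positive. For `r < 1` the substitution `x = log (A² / (1 - r²))`
maps `[0, π]` onto `[-L, L]`, `L = log ((1 + r)/(1 - r))`, and turns `∫ N` into a positive
multiple of `∫_{-L}^{L} E`, where the inversion `A² ↦ (1 - r²)² / A²` has become `x ↦ -x`. In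
`E(x) + E(-x)` only the factor `2 cosh (σ x) - 2 cosh ((σ - 1) x)` with `σ = (d + α - 3)/2 ≥ 1`
is not manifestly even, and it is positive.
-/

open Real MeasureTheory

/-- Surface area of the unit sphere in ℝ^m: ω_m = 2 π^{m/2} / Γ(m/2). -/
noncomputable def sphereArea (m : ℕ) : ℝ :=
  2 * Real.pi ^ ((m : ℝ) / 2) / Real.Gamma ((m : ℝ) / 2)

open Set Filter Topology

noncomputable section

/-- The quantity `A(r, θ)` of the statement: the distance from `r e` to a unit vector at angle `θ`
from `e`. -/
def cosineDist (r θ : ℝ) : ℝ := √(1 + r ^ 2 - 2 * r * cos θ)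

lemma one_add_sq_sub_two_mul_cos (r θ : ℝ) :
    1 + r ^ 2 - 2 * r * cos θ = (r - cos θ) ^ 2 + sin θ ^ 2 := by
  linear_combination -sin_sq_add_cos_sq θ

lemma cosineDist_sq' (r θ : ℝ) : cosineDist r θ ^ 2 = 1 + r ^ 2 - 2 * r * cos θ :=
  sq_sqrt (by rw [one_add_sq_sub_two_mul_cos]; positivity)

lemma cosineDist_sq (r θ : ℝ) : cosineDist r θ ^ 2 = (r - cos θ) ^ 2 + sin θ ^ 2 := by
  rw [cosineDist_sq', one_add_sq_sub_two_mul_cos]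

lemma cosineDist_nonneg (r θ : ℝ) : 0 ≤ cosineDist r θ := sqrt_nonneg _

lemma abs_sin_le_cosineDist (r θ : ℝ) : |sin θ| ≤ cosineDist r θ :=
  abs_le_sqrt (by rw [one_add_sq_sub_two_mul_cos]; nlinarith [sq_nonneg (r - cos θ)])

lemma abs_sub_cos_le_cosineDist (r θ : ℝ) : |r - cos θ| ≤ cosineDist r θ :=
  abs_le_sqrt (by rw [one_add_sq_sub_two_mul_cos]; nlinarith [sq_nonneg (sin θ)])

lemma cosineDist_pos {r θ : ℝ} (hr : 0 < r) (hθ : θ ∈ Ioc 0 π) : 0 < cosineDist r θ := by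
  refine sqrt_pos.2 ?_
  rw [one_add_sq_sub_two_mul_cos]
  rcases hθ.2.lt_or_eq with hθπ | rfl
  · have := sin_pos_of_pos_of_lt_pi hθ.1 hθπ
    positivity
  · rw [cos_pi, sin_pi]; nlinarith

lemma cosineDist_pos_of_lt_one {r : ℝ} (hr : 0 ≤ r) (hr1 : r < 1) (θ : ℝ) :
    0 < cosineDist r θ :=
  sqrt_pos.2 (by nlinarith [cos_le_one θ])

lemma hasDerivAt_cosineDist_rpow_radius {r θ : ℝ} (hA : 0 < cosineDist r θ) (c : ℝ) :
    HasDerivAt (fun r => cosineDist r θ ^ c)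
      (c * (r - cos θ) * cosineDist r θ ^ (c - 2)) r := by
  have hP : HasDerivAt (fun r => 1 + r ^ 2 - 2 * r * cos θ) (2 * r - 2 * cos θ) r := by
    refine (((hasDerivAt_pow 2 r).const_add 1).fun_sub
      (((hasDerivAt_id' r).const_mul 2).mul_const (cos θ))).congr_deriv ?_
    norm_num
  have hP0 : 1 + r ^ 2 - 2 * r * cos θ ≠ 0 := by
    rw [← cosineDist_sq']; positivity
  refine ((hP.sqrt hP0).rpow_const (p := c) (Or.inl hA.ne')).congr_deriv ?_
  rw [← cosineDist, show c - 1 = c - 2 + 1 by ring, rpow_add_one hA.ne']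
  field_simp

lemma hasDerivAt_cosineDist_rpow_angle {r θ : ℝ} (hA : 0 < cosineDist r θ) (c : ℝ) :
    HasDerivAt (fun θ => cosineDist r θ ^ c) (c * r * sin θ * cosineDist r θ ^ (c - 2)) θ := by
  have hP : HasDerivAt (fun θ => 1 + r ^ 2 - 2 * r * cos θ) (2 * r * sin θ) θ := by
    refine (((hasDerivAt_cos θ).const_mul (2 * r)).const_sub (1 + r ^ 2)).congr_deriv ?_
    ring
  have hP0 : 1 + r ^ 2 - 2 * r * cos θ ≠ 0 := by
    rw [← cosineDist_sq']; positivity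
  refine ((hP.sqrt hP0).rpow_const (p := c) (Or.inl hA.ne')).congr_deriv ?_
  rw [← cosineDist, show c - 1 = c - 2 + 1 by ring, rpow_add_one hA.ne']
  field_simp

lemma pow_mul_rpow_le_one {s A c : ℝ} {k : ℕ} (hs : 0 ≤ s) (hs1 : s ≤ 1) (hsA : s ≤ A)
    (hc : c ≤ 0) (hkc : 0 ≤ k + c) : s ^ k * A ^ c ≤ 1 := by
  rcases hs.eq_or_lt with rfl | hs
  · rcases k.eq_zero_or_pos with rfl | hk
    · simp [show c = 0 by push_cast at hkc; linarith]
    · simp [zero_pow hk.ne']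
  calc s ^ k * A ^ c ≤ s ^ k * s ^ c :=
        mul_le_mul_of_nonneg_left (rpow_le_rpow_of_nonpos hs hsA hc) (by positivity)
    _ = s ^ (k + c) := by rw [← rpow_natCast, rpow_add hs]
    _ ≤ 1 := rpow_le_one hs.le hs1 hkc

lemma sin_pow_mul_cosineDist_rpow_le_one {r θ c : ℝ} {k : ℕ} (hθ : θ ∈ Icc 0 π) (hc : c ≤ 0)
    (hkc : 0 ≤ k + c) : sin θ ^ k * cosineDist r θ ^ c ≤ 1 := by
  have hs := sin_nonneg_of_nonneg_of_le_pi hθ.1 hθ.2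
  exact pow_mul_rpow_le_one hs (sin_le_one θ)
    ((abs_of_nonneg hs).symm.trans_le (abs_sin_le_cosineDist r θ)) hc hkc

lemma sq_sub_cos_add_mul_sin_sq_le {κ : ℝ} (hκ : 0 ≤ κ) (r θ : ℝ) :
    (r - cos θ) ^ 2 + κ * sin θ ^ 2 ≤ (1 + κ) * cosineDist r θ ^ 2 := by
  rw [cosineDist_sq]; nlinarith [sq_nonneg (r - cos θ), sq_nonneg (sin θ)]

lemma intervalIntegrable_of_abs_le {f : ℝ → ℝ} {a b C : ℝ} (hf : Measurable f)
    (hC : ∀ x ∈ uIoc a b, |f x| ≤ C) : IntervalIntegrable f volume a b :=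
  intervalIntegrable_const.mono_fun' hf.aestronglyMeasurable
    ((ae_restrict_iff' measurableSet_uIoc).2 (ae_of_all _ hC))

lemma uIoc_zero_pi_subset_Icc : uIoc 0 π ⊆ Icc 0 π := by
  rw [uIoc_of_le pi_pos.le]; exact Ioc_subset_Icc_self

def velocityIntegrand (d : ℕ) (α r θ : ℝ) : ℝ :=
  (r - cos θ) * sin θ ^ (d - 2) * cosineDist r θ ^ (α - 2)

def ratioIntegrand (d : ℕ) (α r θ : ℝ) : ℝ :=
  sin θ ^ (d - 2) * cosineDist r θ ^ (α - 4) *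
    ((r - cos θ) ^ 2 + (d + α - 3) / (d - 1) * sin θ ^ 2)

def ratioDerivIntegrand (d : ℕ) (α r θ : ℝ) : ℝ :=
  sin θ ^ (d - 2) * cosineDist r θ ^ (α - 6) * (r - cos θ) *
    ((r - cos θ) ^ 2 + (d + α - 5) / (d - 1) * sin θ ^ 2)

variable {d : ℕ} {α : ℝ}

lemma abs_velocityIntegrand_le (hd : 2 ≤ d) (hdα : 4 ≤ d + α) (hα : α ≤ 2) (r : ℝ)
    {θ : ℝ} (hθ : θ ∈ Icc 0 π) : |velocityIntegrand d α r θ| ≤ |r| + 1 := by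
  have hs := sin_nonneg_of_nonneg_of_le_pi hθ.1 hθ.2
  have hA := cosineDist_nonneg r θ
  have hw : sin θ ^ (d - 2) * cosineDist r θ ^ (α - 2) ≤ 1 :=
    sin_pow_mul_cosineDist_rpow_le_one hθ (by linarith) (by push_cast [hd]; linarith)
  have hrt : |r - cos θ| ≤ |r| + 1 := (abs_sub _ _).trans (by gcongr; exact abs_cos_le_one θ)
  rw [velocityIntegrand, mul_assoc, abs_mul, abs_of_nonneg (a := _ * _) (by positivity)]
  simpa using mul_le_mul hrt hw (by positivity) (by positivity)

lemma abs_ratioIntegrand_le (hd : 2 ≤ d) (hdα : 4 ≤ d + α) (hα : α < 2) (r : ℝ) {θ : ℝ}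
    (hθ : θ ∈ Icc 0 π) : |ratioIntegrand d α r θ| ≤ 1 + (d + α - 3) / (d - 1) := by
  have hs := sin_nonneg_of_nonneg_of_le_pi hθ.1 hθ.2
  have hA := cosineDist_nonneg r θ
  have hκ : 0 ≤ ((d : ℝ) + α - 3) / (d - 1) := by
    have : (2 : ℝ) ≤ d := by exact_mod_cast hd
    apply div_nonneg <;> linarith
  have hw : sin θ ^ (d - 2) * cosineDist r θ ^ (α - 2) ≤ 1 :=
    sin_pow_mul_cosineDist_rpow_le_one hθ (by linarith) (by push_cast [hd]; linarith)
  have hmerge : cosineDist r θ ^ (α - 4) * cosineDist r θ ^ 2 = cosineDist r θ ^ (α - 2) := by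
    rw [← rpow_add_natCast' hA (by push_cast; linarith)]; push_cast; ring_nf
  rw [ratioIntegrand, abs_of_nonneg (by positivity)]
  calc _ ≤ sin θ ^ (d - 2) * cosineDist r θ ^ (α - 4) *
        ((1 + (d + α - 3) / (d - 1)) * cosineDist r θ ^ 2) := by
        gcongr; exact sq_sub_cos_add_mul_sin_sq_le hκ r θ
    _ = (1 + (d + α - 3) / (d - 1)) * (sin θ ^ (d - 2) * cosineDist r θ ^ (α - 2)) := by
        rw [← hmerge]; ring
    _ ≤ 1 + (d + α - 3) / (d - 1) := mul_le_of_le_one_right (by positivity) hw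

lemma abs_ratioDerivIntegrand_le (hd : 2 ≤ d) (hdα : 5 ≤ d + α) (hα : α < 3) (r : ℝ)
    {θ : ℝ} (hθ : θ ∈ Icc 0 π) :
    |ratioDerivIntegrand d α r θ| ≤ 1 + (d + α - 5) / (d - 1) := by
  have hs := sin_nonneg_of_nonneg_of_le_pi hθ.1 hθ.2
  have hA := cosineDist_nonneg r θ
  have hκ : 0 ≤ ((d : ℝ) + α - 5) / (d - 1) := by
    have : (2 : ℝ) ≤ d := by exact_mod_cast hd
    apply div_nonneg <;> linarith
  have hw : sin θ ^ (d - 2) * cosineDist r θ ^ (α - 3) ≤ 1 :=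
    sin_pow_mul_cosineDist_rpow_le_one hθ (by linarith) (by push_cast [hd]; linarith)
  have hmerge : cosineDist r θ ^ (α - 6) * cosineDist r θ ^ 3 = cosineDist r θ ^ (α - 3) := by
    rw [← rpow_add_natCast' hA (by push_cast; linarith)]; push_cast; ring_nf
  have hQ : 0 ≤ (r - cos θ) ^ 2 + (d + α - 5) / (d - 1) * sin θ ^ 2 := by positivity
  rw [ratioDerivIntegrand, abs_mul, abs_mul, abs_of_nonneg (by positivity), abs_of_nonneg hQ]
  calc _ ≤ sin θ ^ (d - 2) * cosineDist r θ ^ (α - 6) * cosineDist r θ *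
        ((1 + (d + α - 5) / (d - 1)) * cosineDist r θ ^ 2) := by
        gcongr
        · exact abs_sub_cos_le_cosineDist r θ
        · exact sq_sub_cos_add_mul_sin_sq_le hκ r θ
    _ = (1 + (d + α - 5) / (d - 1)) * (sin θ ^ (d - 2) * cosineDist r θ ^ (α - 3)) := by
        rw [← hmerge]; ring
    _ ≤ 1 + (d + α - 5) / (d - 1) := mul_le_of_le_one_right (by positivity) hw

lemma intervalIntegrable_velocityIntegrand (hd : 2 ≤ d) (hdα : 4 ≤ d + α) (hα : α ≤ 2)
    (r : ℝ) : IntervalIntegrable (velocityIntegrand d α r) volume 0 π :=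
  intervalIntegrable_of_abs_le (by unfold velocityIntegrand cosineDist; fun_prop)
    fun _ hθ => abs_velocityIntegrand_le hd hdα hα r (uIoc_zero_pi_subset_Icc hθ)

lemma intervalIntegrable_ratioIntegrand (hd : 2 ≤ d) (hdα : 4 ≤ d + α) (hα : α < 2)
    (r : ℝ) : IntervalIntegrable (ratioIntegrand d α r) volume 0 π :=
  intervalIntegrable_of_abs_le (by unfold ratioIntegrand cosineDist; fun_prop)
    fun _ hθ => abs_ratioIntegrand_le hd hdα hα r (uIoc_zero_pi_subset_Icc hθ)

lemma intervalIntegrable_ratioDerivIntegrand (hd : 2 ≤ d) (hdα : 5 ≤ d + α) (hα : α < 3)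
    (r : ℝ) : IntervalIntegrable (ratioDerivIntegrand d α r) volume 0 π :=
  intervalIntegrable_of_abs_le (by unfold ratioDerivIntegrand cosineDist; fun_prop)
    fun _ hθ => abs_ratioDerivIntegrand_le hd hdα hα r (uIoc_zero_pi_subset_Icc hθ)

lemma hasDerivAt_sin_pow_mul_cosineDist_rpow (hd : 2 ≤ d) {r θ : ℝ}
    (hA : 0 < cosineDist r θ) :
    HasDerivAt (fun θ => sin θ ^ (d - 1) * cosineDist r θ ^ (α - 2))
      ((d - 1) * (r * ratioIntegrand d α r θ - velocityIntegrand d α r θ)) θ := by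
  obtain ⟨k, rfl⟩ : ∃ k, d = k + 2 := ⟨d - 2, by omega⟩
  have hmerge : cosineDist r θ ^ (α - 2) = cosineDist r θ ^ (α - 4) * cosineDist r θ ^ 2 := by
    rw [← rpow_natCast, ← rpow_add hA]; congr 1; push_cast; ring
  have hk : (k : ℝ) + 2 - 1 ≠ 0 := by linarith [k.cast_nonneg (α := ℝ)]
  refine (((hasDerivAt_sin θ).fun_pow (k + 2 - 1)).mul
    (hasDerivAt_cosineDist_rpow_angle hA (α - 2))).congr_deriv ?_
  rw [ratioIntegrand, velocityIntegrand, hmerge, cosineDist_sq,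
    show α - 2 - 2 = α - 4 by ring]
  simp only [show k + 2 - 1 = k + 1 by omega, show k + 2 - 2 = k by omega,
    show k + 1 - 1 = k by omega, pow_succ]
  push_cast
  field_simp
  ring

lemma integral_velocityIntegrand (hd : 2 ≤ d) (hdα : 4 ≤ d + α) (hα : α < 2) {r : ℝ}
    (hr : 0 < r) :
    ∫ θ in 0..π, velocityIntegrand d α r θ = r * ∫ θ in 0..π, ratioIntegrand d α r θ := by
  have hG : ∀ θ ∈ Icc 0 π, ‖sin θ ^ (d - 1) * cosineDist r θ ^ (α - 2)‖ ≤ sin θ :=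
    fun θ hθ => by
      have hs := sin_nonneg_of_nonneg_of_le_pi hθ.1 hθ.2
      have hA := cosineDist_nonneg r θ
      have hw : sin θ ^ (d - 2) * cosineDist r θ ^ (α - 2) ≤ 1 :=
        sin_pow_mul_cosineDist_rpow_le_one hθ (by linarith) (by push_cast [hd]; linarith)
      rw [norm_of_nonneg (by positivity), show d - 1 = d - 2 + 1 by omega, pow_succ]
      nlinarith
  have hlim {l : Filter ℝ} (hl : Ioo 0 π ∈ l) (hsin : Tendsto sin l (𝓝 0)) :
      Tendsto (fun θ => sin θ ^ (d - 1) * cosineDist r θ ^ (α - 2)) l (𝓝 0) :=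
    squeeze_zero_norm' (mem_of_superset hl fun θ hθ => hG θ (Ioo_subset_Icc_self hθ)) hsin
  have hΨ := (intervalIntegrable_ratioIntegrand hd hdα hα r).const_mul r
  have hX := intervalIntegrable_velocityIntegrand hd hdα hα.le r
  have hFTC := intervalIntegral.integral_eq_sub_of_hasDerivAt_of_tendsto pi_pos
    (fun θ hθ => hasDerivAt_sin_pow_mul_cosineDist_rpow hd
      (cosineDist_pos hr (Ioo_subset_Ioc_self hθ)))
    ((hΨ.sub hX).const_mul _)
    (hlim (Ioo_mem_nhdsGT pi_pos)
      ((continuous_sin.tendsto' 0 0 sin_zero).mono_left nhdsWithin_le_nhds))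
    (hlim (Ioo_mem_nhdsLT pi_pos)
      ((continuous_sin.tendsto' π 0 sin_pi).mono_left nhdsWithin_le_nhds))
  rw [sub_zero, intervalIntegral.integral_const_mul, intervalIntegral.integral_sub hΨ hX,
    intervalIntegral.integral_const_mul] at hFTC
  have hd1 : (d : ℝ) - 1 ≠ 0 := by
    have : (2 : ℝ) ≤ d := by exact_mod_cast hd
    linarith
  linarith [(mul_eq_zero.1 hFTC).resolve_left hd1]

lemma hasDerivAt_ratioIntegrand (hd : 2 ≤ d) {r θ : ℝ} (hA : 0 < cosineDist r θ) :
    HasDerivAt (fun r => ratioIntegrand d α r θ)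
      ((α - 2) * ratioDerivIntegrand d α r θ) r := by
  have hmerge : cosineDist r θ ^ (α - 4) = cosineDist r θ ^ (α - 6) * cosineDist r θ ^ 2 := by
    rw [← rpow_natCast, ← rpow_add hA]; congr 1; push_cast; ring
  have hd1 : (d : ℝ) - 1 ≠ 0 := by
    have : (2 : ℝ) ≤ d := by exact_mod_cast hd
    linarith
  refine ((hasDerivAt_cosineDist_rpow_radius hA (α - 4)).const_mul (sin θ ^ (d - 2)) |>.mul
    ((((hasDerivAt_id' r).sub_const (cos θ)).fun_pow 2).add_const
      ((d + α - 3) / (d - 1) * sin θ ^ 2))).congr_deriv ?_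
  rw [ratioDerivIntegrand, hmerge, cosineDist_sq, show α - 4 - 2 = α - 6 by ring]
  field_simp
  ring

lemma hasDerivAt_integral_ratioIntegrand (hd : 2 ≤ d) (hdα : 5 ≤ d + α) (hα : α < 2) {r : ℝ}
    (hr : 0 < r) :
    HasDerivAt (fun r => ∫ θ in 0..π, ratioIntegrand d α r θ)
      ((α - 2) * ∫ θ in 0..π, ratioDerivIntegrand d α r θ) r := by
  have hΨ := intervalIntegrable_ratioIntegrand hd (by linarith) hα
  have hN := intervalIntegrable_ratioDerivIntegrand hd hdα (by linarith) r
  rw [← intervalIntegral.integral_const_mul]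
  refine (intervalIntegral.hasDerivAt_integral_of_dominated_loc_of_deriv_le
    (bound := fun _ => (2 - α) * (1 + (d + α - 5) / (d - 1))) (Ioi_mem_nhds hr)
    (Eventually.of_forall fun x => (hΨ x).def'.1) (hΨ r) (hN.const_mul _).def'.1
    (ae_of_all _ fun θ hθ x _ => ?_) intervalIntegrable_const
    (ae_of_all _ fun θ hθ x hx => hasDerivAt_ratioIntegrand hd
      (cosineDist_pos hx (by rwa [uIoc_of_le pi_pos.le] at hθ)))).2
  rw [norm_mul, norm_of_nonpos (by linarith), neg_sub]
  exact mul_le_mul_of_nonneg_left (abs_ratioDerivIntegrand_le hd hdα (by linarith) x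
    (uIoc_zero_pi_subset_Icc hθ)) (by linarith)

lemma ratioDerivIntegrand_pos_of_one_le (hd : 2 ≤ d) (hdα : 5 ≤ d + α) {r θ : ℝ}
    (hr : 1 ≤ r) (hθ : θ ∈ Ioo 0 π) : 0 < ratioDerivIntegrand d α r θ := by
  have hs := sin_pos_of_pos_of_lt_pi hθ.1 hθ.2
  have hA : 0 < cosineDist r θ := cosineDist_pos (by linarith) (Ioo_subset_Ioc_self hθ)
  have hrt : 0 < r - cos θ := by
    linarith [cos_lt_cos_of_nonneg_of_le_pi le_rfl hθ.2.le hθ.1, cos_zero]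
  have hκ : 0 ≤ ((d : ℝ) + α - 5) / (d - 1) := by
    have : (2 : ℝ) ≤ d := by exact_mod_cast hd
    apply div_nonneg <;> linarith
  exact mul_pos (mul_pos (mul_pos (pow_pos hs _) (rpow_pos_of_pos hA _)) hrt)
    (add_pos_of_pos_of_nonneg (pow_pos hrt 2) (mul_nonneg hκ (sq_nonneg _)))

lemma integral_pos_of_add_neg_pos {f : ℝ → ℝ} {L : ℝ} (hL : 0 < L)
    (hf : IntervalIntegrable f volume (-L) L) (hpos : ∀ x ∈ Ioo 0 L, 0 < f x + f (-x)) :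
    0 < ∫ x in -L..L, f x := by
  have hf₁ : IntervalIntegrable f volume (-L) 0 := hf.mono_set
    (uIcc_subset_uIcc_left (by rw [uIcc_of_le (by linarith)]; constructor <;> linarith))
  have hf₂ : IntervalIntegrable f volume 0 L := hf.mono_set
    (uIcc_subset_uIcc_right (by rw [uIcc_of_le (by linarith)]; constructor <;> linarith))
  have hf₁' : IntervalIntegrable (fun x => f (-x)) volume 0 L := by
    simpa using ((IntervalIntegrable.iff_comp_neg enorm_ne_top).1 hf₁).symm
  rw [← intervalIntegral.integral_add_adjacent_intervals hf₁ hf₂, ← neg_zero,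
    ← intervalIntegral.integral_comp_neg, neg_zero, ← intervalIntegral.integral_add hf₁' hf₂]
  exact intervalIntegral.intervalIntegral_pos_of_pos_on (hf₁'.add hf₂)
    (fun x hx => by linarith [hpos x hx]) hL

/-- The integrand `N` after the substitution `x = log (A² / (1 - r²))`, up to a positive constant
factor, with `L = log ((1 + r) / (1 - r))`, `ν = (d - 3) / 2` and `σ = (d + α - 3) / 2`. -/
def logIntegrand (ν σ κ L x : ℝ) : ℝ :=
  (2 * cosh L - 2 * cosh x) ^ ν * (exp (σ * x) - exp ((σ - 1) * x)) *
    (2 * cosh x - 2 + κ * (2 * cosh L - 2 * cosh x))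

lemma continuous_logIntegrand {ν : ℝ} (hν : 0 ≤ ν) (σ κ L : ℝ) :
    Continuous (logIntegrand ν σ κ L) := by
  have : Continuous fun x => (2 * cosh L - 2 * cosh x) ^ ν :=
    (by fun_prop : Continuous fun x => 2 * cosh L - 2 * cosh x).rpow_const fun _ => Or.inr hν
  unfold logIntegrand
  fun_prop

lemma logIntegrand_add_neg_pos {ν σ κ L x : ℝ} (hσ : 1 / 2 < σ) (hκ : 0 ≤ κ)
    (hx : x ∈ Ioo 0 L) : 0 < logIntegrand ν σ κ L x + logIntegrand ν σ κ L (-x) := by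
  have hD : 0 < 2 * cosh L - 2 * cosh x := by
    have : cosh x < cosh L := cosh_lt_cosh.2 (by
      rw [abs_of_pos hx.1, abs_of_pos (hx.1.trans hx.2)]; exact hx.2)
    linarith
  have hx1 : 1 < cosh x := one_lt_cosh.2 hx.1.ne'
  have hodd : 0 < 2 * cosh (σ * x) - 2 * cosh ((σ - 1) * x) := by
    have : cosh ((σ - 1) * x) < cosh (σ * x) := by
      rw [cosh_lt_cosh, abs_mul, abs_mul, abs_of_pos hx.1, abs_of_pos (by linarith : 0 < σ)]
      exact mul_lt_mul_of_pos_right (abs_lt.2 ⟨by linarith, by linarith⟩) hx.1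
    linarith
  have hsum : logIntegrand ν σ κ L x + logIntegrand ν σ κ L (-x) =
      (2 * cosh L - 2 * cosh x) ^ ν * (2 * cosh (σ * x) - 2 * cosh ((σ - 1) * x)) *
        (2 * cosh x - 2 + κ * (2 * cosh L - 2 * cosh x)) := by
    rw [logIntegrand, logIntegrand, cosh_neg, cosh_eq (σ * x), cosh_eq ((σ - 1) * x)]
    ring_nf
  rw [hsum]
  exact mul_pos (mul_pos (rpow_pos_of_pos hD ν) hodd) (by nlinarith)

/-- The factors produced by the substitution `x = log (A² / m)`, where `m = 1 - r²`, `ρ = 2 r`. -/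
lemma pow_mul_rpow_eq_substitution_factor (hd : 2 ≤ d) {ν σ s A m ρ : ℝ}
    (hν : 2 * ν = d - 3) (hσ : 2 * σ = d + α - 3) (hs : 0 < s) (hA : 0 < A) (hm : 0 < m)
    (hρ : 0 < ρ) :
    s ^ (d - 2) * A ^ (α - 6) = m ^ (ν + σ + 1) / ρ ^ (2 * ν + 4) *
      (((ρ * s) ^ 2 / (m * A ^ 2)) ^ ν * (A ^ 2 / m) ^ (σ - 1) * (ρ / m) *
        (ρ ^ 2 / (m * A ^ 2)) * (ρ * s / A ^ 2)) := by
  refine log_injOn_pos (mem_Ioi.2 (by positivity)) (mem_Ioi.2 (by positivity)) ?_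
  simp (disch := positivity) only [log_mul, log_div, log_rpow, log_pow]
  push_cast [hd]
  linear_combination (log A - log s) * hν - log A * hσ

lemma ratioDerivIntegrand_eq_logIntegrand (hd : 3 ≤ d) {ν σ r θ : ℝ} (hν : 2 * ν = d - 3)
    (hσ : 2 * σ = d + α - 3) (h0 : 0 < r) (h1 : r < 1) (hθ : θ ∈ Icc 0 π) :
    ratioDerivIntegrand d α r θ = (1 - r ^ 2) ^ (ν + σ + 1) / (2 * r) ^ (2 * ν + 4) *
      (logIntegrand ν σ ((d + α - 5) / (d - 1)) (log ((1 + r) / (1 - r)))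
        (log (cosineDist r θ ^ 2 / (1 - r ^ 2))) * (2 * r * sin θ / cosineDist r θ ^ 2)) := by
  have hA : 0 < cosineDist r θ := cosineDist_pos_of_lt_one h0.le h1 θ
  have hA2 := cosineDist_sq' r θ
  have hm : 0 < 1 - r ^ 2 := by nlinarith
  have hP : 1 + r ^ 2 - 2 * r * cos θ ≠ 0 := by rw [← hA2]; positivity
  rcases (sin_nonneg_of_nonneg_of_le_pi hθ.1 hθ.2).eq_or_lt with hs | hs
  · rw [ratioDerivIntegrand, ← hs, zero_pow (by omega)]; simp
  have hy : 0 < cosineDist r θ ^ 2 / (1 - r ^ 2) := by positivity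
  have hcoshL : 2 * cosh (log ((1 + r) / (1 - r)))
        - 2 * cosh (log (cosineDist r θ ^ 2 / (1 - r ^ 2)))
      = (2 * r * sin θ) ^ 2 / ((1 - r ^ 2) * cosineDist r θ ^ 2) := by
    have : 0 < 1 - r := by linarith
    rw [cosh_log (by positivity), cosh_log hy, mul_pow, sin_sq, hA2]
    field_simp
    ring
  have hcosh : 2 * cosh (log (cosineDist r θ ^ 2 / (1 - r ^ 2))) - 2
      = (2 * r * (r - cos θ)) ^ 2 / ((1 - r ^ 2) * cosineDist r θ ^ 2) := by
    rw [cosh_log hy, hA2]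
    field_simp
    ring
  have hexp : exp (σ * log (cosineDist r θ ^ 2 / (1 - r ^ 2)))
        - exp ((σ - 1) * log (cosineDist r θ ^ 2 / (1 - r ^ 2)))
      = (cosineDist r θ ^ 2 / (1 - r ^ 2)) ^ (σ - 1) * (2 * r / (1 - r ^ 2)) * (r - cos θ) := by
    rw [mul_comm σ, mul_comm (σ - 1), ← rpow_def_of_pos hy, ← rpow_def_of_pos hy,
      show σ = σ - 1 + 1 by ring, rpow_add_one hy.ne', add_sub_cancel_right, hA2]
    field_simp
    ring
  rw [ratioDerivIntegrand, logIntegrand, hcoshL, hcosh, hexp,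
    pow_mul_rpow_eq_substitution_factor (by omega) hν hσ hs hA hm (by positivity : 0 < 2 * r)]
  ring

lemma integral_ratioDerivIntegrand_eq (hd : 3 ≤ d) {ν σ r : ℝ} (hν : 2 * ν = d - 3)
    (hσ : 2 * σ = d + α - 3) (h0 : 0 < r) (h1 : r < 1) :
    ∫ θ in 0..π, ratioDerivIntegrand d α r θ =
      (1 - r ^ 2) ^ (ν + σ + 1) / (2 * r) ^ (2 * ν + 4) *
        ∫ x in -log ((1 + r) / (1 - r))..log ((1 + r) / (1 - r)),
          logIntegrand ν σ ((d + α - 5) / (d - 1)) (log ((1 + r) / (1 - r))) x := by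
  have hA (θ : ℝ) : 0 < cosineDist r θ := cosineDist_pos_of_lt_one h0.le h1 θ
  have hm : 0 < 1 - r ^ 2 := by nlinarith
  have h1r : 0 < 1 - r := by linarith
  have hν0 : 0 ≤ ν := by
    have : (3 : ℝ) ≤ d := by exact_mod_cast hd
    linarith
  have hu (θ : ℝ) : HasDerivAt (fun θ => log (cosineDist r θ ^ 2 / (1 - r ^ 2)))
      (2 * r * sin θ / cosineDist r θ ^ 2) θ := by
    have hP : HasDerivAt (fun θ => cosineDist r θ ^ 2) (2 * r * sin θ) θ := by
      simp only [cosineDist_sq']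
      refine (((hasDerivAt_cos θ).const_mul (2 * r)).const_sub (1 + r ^ 2)).congr_deriv ?_
      ring
    refine ((hP.div_const _).log (by have := hA θ; positivity)).congr_deriv ?_
    field_simp
  have hu' : Continuous fun θ => 2 * r * sin θ / cosineDist r θ ^ 2 :=
    (by fun_prop : Continuous fun θ => 2 * r * sin θ).div
      (by unfold cosineDist; fun_prop) fun θ => (pow_pos (hA θ) 2).ne'
  have hsubst := intervalIntegral.integral_comp_mul_deriv (a := 0) (b := π) (fun θ _ => hu θ)
    hu'.continuousOn (continuous_logIntegrand hν0 σ ((d + α - 5) / (d - 1))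
      (log ((1 + r) / (1 - r))))
  have hu0 : log (cosineDist r 0 ^ 2 / (1 - r ^ 2)) = -log ((1 + r) / (1 - r)) := by
    rw [← log_inv, inv_div, cosineDist_sq', cos_zero]
    congr 1
    field_simp
    ring
  have huπ : log (cosineDist r π ^ 2 / (1 - r ^ 2)) = log ((1 + r) / (1 - r)) := by
    rw [cosineDist_sq', cos_pi]
    congr 1
    field_simp
    ring
  rw [hu0, huπ] at hsubst
  rw [← hsubst, ← intervalIntegral.integral_const_mul]
  exact intervalIntegral.integral_congr fun θ hθ => by
    rw [uIcc_of_le pi_pos.le] at hθ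
    exact ratioDerivIntegrand_eq_logIntegrand hd hν hσ h0 h1 hθ

lemma integral_ratioDerivIntegrand_pos (hd : 3 ≤ d) (hdα : 5 ≤ d + α) (hα : α < 3) {r : ℝ}
    (hr : 0 < r) : 0 < ∫ θ in 0..π, ratioDerivIntegrand d α r θ := by
  rcases lt_or_ge r 1 with h1 | h1
  · have hd3 : (3 : ℝ) ≤ d := by exact_mod_cast hd
    have hm : 0 < 1 - r ^ 2 := by nlinarith
    have hL : 0 < log ((1 + r) / (1 - r)) :=
      log_pos ((one_lt_div (by linarith)).2 (by linarith))
    have hκ : 0 ≤ ((d : ℝ) + α - 5) / (d - 1) := div_nonneg (by linarith) (by linarith)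
    rw [integral_ratioDerivIntegrand_eq hd (ν := (d - 3) / 2) (σ := (d + α - 3) / 2)
      (by ring) (by ring) hr h1]
    refine mul_pos (div_pos (rpow_pos_of_pos hm _) (rpow_pos_of_pos (by positivity) _)) ?_
    exact integral_pos_of_add_neg_pos hL
      ((continuous_logIntegrand (by linarith) _ _ _).intervalIntegrable _ _)
      fun x hx => logIntegrand_add_neg_pos (by linarith) hκ hx
  · exact intervalIntegral.intervalIntegral_pos_of_pos_on
      (intervalIntegrable_ratioDerivIntegrand (by omega) hdα hα r)
      (fun θ hθ => ratioDerivIntegrand_pos_of_one_le (by omega) hdα h1 hθ) pi_pos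

lemma strictAntiOn_integral_ratioIntegrand (hd : 3 ≤ d) (hdα : 5 ≤ d + α) (hα : α < 2) :
    StrictAntiOn (fun r => ∫ θ in 0..π, ratioIntegrand d α r θ) (Ioi 0) := by
  have hderiv {r : ℝ} (hr : 0 < r) := hasDerivAt_integral_ratioIntegrand (by omega) hdα hα hr
  refine strictAntiOn_of_hasDerivWithinAt_neg (convex_Ioi 0)
    (f' := fun r => (α - 2) * ∫ θ in 0..π, ratioDerivIntegrand d α r θ)
    (fun r hr => (hderiv hr).continuousAt.continuousWithinAt) (fun r hr => ?_) (fun r hr => ?_)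
  · rw [interior_Ioi] at hr ⊢
    exact (hderiv hr).hasDerivWithinAt
  · rw [interior_Ioi] at hr
    exact mul_neg_of_neg_of_pos (by linarith)
      (integral_ratioDerivIntegrand_pos hd hdα (by linarith) hr)

lemma sphereArea_pos {m : ℕ} (hm : 0 < m) : 0 < sphereArea m := by
  have : (0 : ℝ) < m / 2 := by positivity
  exact div_pos (by positivity) (Gamma_pos_of_pos this)

end

theorem stmt4 (d : ℕ) (hd : 4 ≤ d) (α : ℝ) (hα1 : 5 - (d : ℝ) ≤ α) (hα2 : α < 2)
    (φ : ℝ → ℝ)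
    (hφ : ∀ r : ℝ, φ r = sphereArea (d - 1) / sphereArea d *
      ∫ θ in (0:ℝ)..Real.pi,
        (r - Real.cos θ) * (Real.sin θ) ^ (d - 2) *
          (Real.sqrt (1 + r ^ 2 - 2 * r * Real.cos θ)) ^ (α - 2)) :
    StrictAntiOn (fun r => φ r / r) (Set.Ioi 0) := by
  have hdα : 5 ≤ (d : ℝ) + α := by linarith
  have hc : 0 < sphereArea (d - 1) / sphereArea d :=
    div_pos (sphereArea_pos (by omega)) (sphereArea_pos (by omega))
  have hanti := strictAntiOn_integral_ratioIntegrand (by omega) hdα hα2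
  refine StrictAntiOn.congr (fun a ha b hb hab => mul_lt_mul_of_pos_left (hanti ha hb hab) hc)
    fun r (hr : 0 < r) => ?_
  have hX : φ r = sphereArea (d - 1) / sphereArea d * ∫ θ in 0..π, velocityIntegrand d α r θ :=
    hφ r
  rw [hX, integral_velocityIntegrand (by omega) (by linarith) hα2 hr]
  field_simp
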